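/- The formula W_◇ := ((◇x → ◇y) ∧ ((◇y → ◇z) → ◇z)) → (◇z ∨ ◇((x → y) ∧ ((y → z) → z))) is valid in every witnessed crisp Gödel-Kripke model: at any world u, its evaluation equals 1. -/
import Mathlib


/-- Gödel implication on the real unit interval (as reals). -/
noncomputable def gimp (x y : ℝ) : ℝ := if x ≤ y then 1 else y

/-- Gödel negation. -/
noncomputable def gneg (x : ℝ) : ℝ := gimp x 0
/-- Bi-modal formulas. -/
inductive MFm : Type where
  | var : ℕ → MFm
  | bot : MFm
  | and : MFm → MFm → MFm
  | or : MFm → MFm → MFm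
  | imp : MFm → MFm → MFm
  | box : MFm → MFm
  | dia : MFm → MFm

/-- Evaluation in a crisp Gödel-Kripke model: `□` is the infimum over
successors (`1` if there are none), `◇` the supremum (`0` if none). -/
noncomputable def ceval {W : Type} (R : W → W → Prop) (v : W → ℕ → ℝ) :
    MFm → W → ℝ
  | .var n, u => v u n
  | .bot, _ => 0
  | .and φ ψ, u => min (ceval R v φ u) (ceval R v ψ u)
  | .or φ ψ, u => max (ceval R v φ u) (ceval R v ψ u)
  | .imp φ ψ, u => gimp (ceval R v φ u) (ceval R v ψ u)
  | .box φ, u => sInf ({x | ∃ w, R u w ∧ x = ceval R v φ w} ∪ {1})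
  | .dia φ, u => sSup ({x | ∃ w, R u w ∧ x = ceval R v φ w} ∪ {0})

/-- A crisp model is witnessed if every `□`-infimum and `◇`-supremum is
attained at a successor (or equals the trivial value `1`, resp. `0`,
corresponding to a witness with `R`-value `0` in the valued reading). -/
def CWitnessed {W : Type} (R : W → W → Prop) (v : W → ℕ → ℝ) : Prop :=
  ∀ (φ : MFm) (u : W),
    (ceval R v (.box φ) u = 1 ∨
      ∃ w, R u w ∧ ceval R v φ w = ceval R v (.box φ) u) ∧
    (ceval R v (.dia φ) u = 0 ∨
      ∃ w, R u w ∧ ceval R v φ w = ceval R v (.dia φ) u)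

lemma gimp_of_le {x y : ℝ} (h : x ≤ y) : gimp x y = 1 := if_pos h

lemma gimp_of_lt {x y : ℝ} (h : y < x) : gimp x y = y := if_neg (not_le.2 h)

lemma ceval_mem {W : Type} (R : W → W → Prop) (v : W → ℕ → ℝ)
    (hv : ∀ w n, v w n ∈ Set.Icc (0:ℝ) 1) :
    ∀ (φ : MFm) (w : W), ceval R v φ w ∈ Set.Icc (0:ℝ) 1 := by
  intro φ
  induction φ with
  | var n => intro w; exact hv w n
  | bot => intro w; simp [ceval]
  | and φ ψ ihφ ihψ =>
    intro w
    exact ⟨le_min (ihφ w).1 (ihψ w).1, min_le_of_left_le (ihφ w).2⟩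
  | or φ ψ ihφ ihψ =>
    intro w
    exact ⟨le_max_of_le_left (ihφ w).1, max_le (ihφ w).2 (ihψ w).2⟩
  | imp φ ψ ihφ ihψ =>
    intro w
    show gimp _ _ ∈ _
    unfold gimp
    split
    · exact ⟨zero_le_one, le_rfl⟩
    · exact ihψ w
  | box φ ih =>
    intro w
    have h1 : (1:ℝ) ∈ ({x | ∃ w', R w w' ∧ x = ceval R v φ w'} ∪ {1} : Set ℝ) := by
      right; rfl
    constructor
    · apply le_csInf ⟨1, h1⟩
      rintro x (⟨w', _, rfl⟩ | rfl)
      · exact (ih w').1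
      · exact zero_le_one
    · apply csInf_le _ h1
      refine ⟨0, ?_⟩
      rintro x (⟨w', _, rfl⟩ | rfl)
      · exact (ih w').1
      · exact zero_le_one
  | dia φ ih =>
    intro w
    have h0 : (0:ℝ) ∈ ({x | ∃ w', R w w' ∧ x = ceval R v φ w'} ∪ {0} : Set ℝ) := by
      right; rfl
    constructor
    · apply le_csSup _ h0
      refine ⟨1, ?_⟩
      rintro x (⟨w', _, rfl⟩ | rfl)
      · exact (ih w').2
      · exact zero_le_one
    · apply csSup_le ⟨0, h0⟩
      rintro x (⟨w', _, rfl⟩ | rfl)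
      · exact (ih w').2
      · exact zero_le_one

lemma le_dia {W : Type} (R : W → W → Prop) (v : W → ℕ → ℝ)
    (hv : ∀ w n, v w n ∈ Set.Icc (0:ℝ) 1) (φ : MFm) {u w : W} (h : R u w) :
    ceval R v φ w ≤ ceval R v (.dia φ) u := by
  show _ ≤ sSup _
  apply le_csSup
  · refine ⟨1, ?_⟩
    rintro x (⟨w', _, rfl⟩ | rfl)
    · exact (ceval_mem R v hv φ w').2
    · exact zero_le_one
  · exact Or.inl ⟨w, h, rfl⟩

lemma dia_nonneg {W : Type} (R : W → W → Prop) (v : W → ℕ → ℝ)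
    (hv : ∀ w n, v w n ∈ Set.Icc (0:ℝ) 1) (φ : MFm) (u : W) :
    0 ≤ ceval R v (.dia φ) u :=
  (ceval_mem R v hv (.dia φ) u).1

/-- `W_◇ := ((◇x→◇y) ∧ ((◇y→◇z)→◇z)) → (◇z ∨ ◇((x→y) ∧ ((y→z)→z)))`
is valid in every witnessed crisp Gödel-Kripke model. -/
theorem wdia_valid_in_witnessed_crisp_models
    {W : Type} (R : W → W → Prop) (v : W → ℕ → ℝ)
    (hv : ∀ w n, v w n ∈ Set.Icc (0:ℝ) 1)
    (hwit : CWitnessed R v) (u : W) :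
    let x : MFm := .var 0
    let y : MFm := .var 1
    let z : MFm := .var 2
    ceval R v
      (.imp (.and (.imp (.dia x) (.dia y))
                  (.imp (.imp (.dia y) (.dia z)) (.dia z)))
            (.or (.dia z)
                 (.dia (.and (.imp x y) (.imp (.imp y z) z))))) u = 1 := by
  intro x y z
  have eimp : ∀ (φ ψ : MFm) (w : W),
      ceval R v (.imp φ ψ) w = gimp (ceval R v φ w) (ceval R v ψ w) := fun _ _ _ => rfl
  have eand : ∀ (φ ψ : MFm) (w : W),
      ceval R v (.and φ ψ) w = min (ceval R v φ w) (ceval R v ψ w) := fun _ _ _ => rfl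
  have eor : ∀ (φ ψ : MFm) (w : W),
      ceval R v (.or φ ψ) w = max (ceval R v φ w) (ceval R v ψ w) := fun _ _ _ => rfl
  set a := ceval R v (.dia x) u with ha
  set b := ceval R v (.dia y) u with hb
  set c := ceval R v (.dia z) u with hc
  set d := ceval R v (.dia (.and (.imp x y) (.imp (.imp y z) z))) u with hd
  rw [eimp, eand, eimp, eimp, eimp, eor]
  suffices h : min (gimp a b) (gimp (gimp b c) c) ≤ max c d by
    exact gimp_of_le h
  by_cases hbc : b ≤ c
  · -- then A ≤ gimp 1 c ≤ max c d
    rw [gimp_of_le hbc]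
    by_cases hc1 : (1:ℝ) ≤ c
    · rw [gimp_of_le hc1]
      exact le_max_of_le_left ((min_le_right _ _).trans hc1)
    · rw [gimp_of_lt (not_le.1 hc1)]
      exact le_max_of_le_left (min_le_right _ _)
  · push_neg at hbc
    rw [gimp_of_lt hbc, gimp_of_le le_rfl]
    -- witness for ◇y
    have hb0 : b ≠ 0 := by
      have : (0:ℝ) ≤ c := (ceval_mem R v hv (.dia z) u).1
      exact ne_of_gt (lt_of_le_of_lt this hbc)
    rcases (hwit y u).2 with h0 | ⟨w, hRw, hyw⟩
    · exact absurd h0 hb0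
    have hxw : ceval R v x w ≤ a := le_dia R v hv x hRw
    have hzw : ceval R v z w ≤ c := le_dia R v hv z hRw
    have hinner : ceval R v (.and (.imp x y) (.imp (.imp y z) z)) w
        = min (gimp (ceval R v x w) (ceval R v y w)) 1 := by
      rw [eand, eimp, eimp, eimp, hyw]
      rw [gimp_of_lt (lt_of_le_of_lt hzw hbc), gimp_of_le le_rfl]
    have hdle : min (gimp (ceval R v x w) (ceval R v y w)) 1 ≤ d := by
      rw [← hinner]
      exact le_dia R v hv _ hRw
    have key : min (gimp a b) 1 ≤ min (gimp (ceval R v x w) (ceval R v y w)) 1 := by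
      by_cases hab : a ≤ b
      · have hxy : ceval R v x w ≤ ceval R v y w := by
          rw [hyw]; exact hxw.trans hab
        rw [gimp_of_le hab, gimp_of_le hxy]
      · rw [gimp_of_lt (not_le.1 hab)]
        apply le_min _ (min_le_right _ _)
        unfold gimp
        split
        · exact min_le_right _ _
        · rw [hyw]; exact min_le_left _ _
    exact le_max_of_le_right (key.trans hdle)
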